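/- arXiv:1004.0964 — 2 statements merged into one kernel-verified Lean document; each statement's English description precedes it below -/
import Mathlib

section
/- Let k be a commutative ring, A an associative unital k-algebra, and d, d' : A → A derivations with d∘d = 0, d'∘d' = 0 and d∘d' = d'∘d; let ∗ be the twisted product x∗y := x·y + d(x)·d'(y). If e : A → A is any derivation of A satisfying e∘d = d∘e and e∘d' = d'∘e, then e is also a derivation for ∗, i.e. e(x∗y) = e(x)∗y + x∗e(y) for all x, y ∈ A. In particular, d and d' are themselves derivations for ∗. -/
/-!
Expanding `e (x * y + d x * d' y)` by the Leibniz rule gives `e x * y + x * e y` plus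
`e (d x) * d' y + d x * e (d' y)`, and commuting `e` past `d` and `d'` turns the last two terms
into the correction terms of `e x ∗ y` and `x ∗ e y`. Since `d` and `d'` commute with
themselves and with each other, they are special cases of `e`.
-/

section TwistedMul

variable {A : Type*} [NonUnitalNonAssocSemiring A]

def twistedMul (d d' : A →+ A) (x y : A) : A := x * y + d x * d' y

theorem map_twistedMul_of_commute (d d' e : A →+ A)
    (he_leib : ∀ x y : A, e (x * y) = e x * y + x * e y)
    (hed : ∀ x : A, e (d x) = d (e x)) (hed' : ∀ x : A, e (d' x) = d' (e x)) (x y : A) :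
    e (twistedMul d d' x y) = twistedMul d d' (e x) y + twistedMul d d' x (e y) := by
  simp only [twistedMul, map_add, he_leib, hed, hed']
  abel

end TwistedMul

theorem derivation_for_twisted_product_general
    {k A : Type*} [CommRing k] [Ring A] [Algebra k A]
    (d d' e : A →ₗ[k] A)
    (hd_leib : ∀ x y : A, d (x * y) = d x * y + x * d y)
    (hd'_leib : ∀ x y : A, d' (x * y) = d' x * y + x * d' y)
    (he_leib : ∀ x y : A, e (x * y) = e x * y + x * e y)
    (hcomm : ∀ x : A, d (d' x) = d' (d x))
    (hed : ∀ x : A, e (d x) = d (e x))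
    (hed' : ∀ x : A, e (d' x) = d' (e x))
    (mul' : A → A → A)
    (hmul' : ∀ x y : A, mul' x y = x * y + d x * d' y) :
    (∀ x y : A, e (mul' x y) = mul' (e x) y + mul' x (e y)) ∧
    (∀ x y : A, d (mul' x y) = mul' (d x) y + mul' x (d y)) ∧
    (∀ x y : A, d' (mul' x y) = mul' (d' x) y + mul' x (d' y)) := by
  obtain rfl : mul' = twistedMul d.toAddMonoidHom d'.toAddMonoidHom := funext₂ hmul'
  exact ⟨map_twistedMul_of_commute _ _ e.toAddMonoidHom he_leib hed hed',
    map_twistedMul_of_commute _ _ d.toAddMonoidHom hd_leib (fun _ ↦ rfl) hcomm,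
    map_twistedMul_of_commute _ _ d'.toAddMonoidHom hd'_leib (fun x ↦ (hcomm x).symm)
      fun _ ↦ rfl⟩

/-- Algebraic model of the independence of derivations from the product:
a derivation commuting with d and d' is also a derivation for the twisted
product x∗y = x·y + d(x)·d'(y); in particular d and d' themselves are. -/
theorem derivation_for_twisted_product
    {k A : Type*} [CommRing k] [Ring A] [Algebra k A]
    (d d' e : A →ₗ[k] A)
    (hd_leib : ∀ x y : A, d (x * y) = d x * y + x * d y)
    (hd'_leib : ∀ x y : A, d' (x * y) = d' x * y + x * d' y)
    (he_leib : ∀ x y : A, e (x * y) = e x * y + x * e y)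
    (hdd : ∀ x : A, d (d x) = 0)
    (hd'd' : ∀ x : A, d' (d' x) = 0)
    (hcomm : ∀ x : A, d (d' x) = d' (d x))
    (hed : ∀ x : A, e (d x) = d (e x))
    (hed' : ∀ x : A, e (d' x) = d' (e x))
    (mul' : A → A → A)
    (hmul' : ∀ x y : A, mul' x y = x * y + d x * d' y) :
    (∀ x y : A, e (mul' x y) = mul' (e x) y + mul' x (e y)) ∧
    (∀ x y : A, d (mul' x y) = mul' (d x) y + mul' x (d y)) ∧
    (∀ x y : A, d' (mul' x y) = mul' (d' x) y + mul' x (d' y)) :=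
  derivation_for_twisted_product_general d d' e hd_leib hd'_leib he_leib hcomm hed hed' mul' hmul'
end

section
/- Let k be a commutative ring and A an associative unital k-algebra in which 2 = 0, and let d, d' : A → A be derivations with d∘d = 0, d'∘d' = 0 and d∘d' = d'∘d. Define x∗y := x·y + d(x)·d'(y) + d'(x)·d(y) + (d∘d')(x)·(d∘d')(y). Then ∗ is an associative product on A with unit 1, and the k-linear map f = id_A + d∘d' satisfies f∘f = id_A and f(x·y) = f(x)∗f(y) for all x, y ∈ A; hence f is an algebra isomorphism from (A, ·) to (A, ∗). -/
/-!
Write `D = d ∘ d'`. Since `d`, `d'` square to zero and commute, `D` is killed by `d`, `d'` and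
itself, so `f = 1 + D` is an involution when `2 = 0`. Expanding `D (x * y)` by the Leibniz rule gives
`x * y + D (x * y) = f x ∗ f y`, i.e. `f` is multiplicative from `(A, ·)` to `(A, ∗)`. Hence `∗` is
the product `·` transported along the bijection `f`, so it is associative with unit `f 1 = 1`.
-/

section Transport

variable {M N : Type*}

theorem Equiv.mul_eq_of_map_mul [Mul M] (e : M ≃ N) {mul' : N → N → N}
    (he : ∀ x y, e (x * y) = mul' (e x) (e y)) (a b : N) :
    mul' a b = e (e.symm a * e.symm b) := by
  simp only [he, Equiv.apply_symm_apply]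

theorem Equiv.mul_assoc_of_map_mul [Semigroup M] (e : M ≃ N) {mul' : N → N → N}
    (he : ∀ x y, e (x * y) = mul' (e x) (e y)) (a b c : N) :
    mul' (mul' a b) c = mul' a (mul' b c) := by
  simp only [e.mul_eq_of_map_mul he, Equiv.symm_apply_apply, mul_assoc]

theorem Equiv.mul_map_one_of_map_mul [MulOneClass M] (e : M ≃ N) {mul' : N → N → N}
    (he : ∀ x y, e (x * y) = mul' (e x) (e y)) (a : N) :
    mul' a (e 1) = a := by
  rw [e.mul_eq_of_map_mul he, Equiv.symm_apply_apply, mul_one, Equiv.apply_symm_apply]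

theorem Equiv.map_one_mul_of_map_mul [MulOneClass M] (e : M ≃ N) {mul' : N → N → N}
    (he : ∀ x y, e (x * y) = mul' (e x) (e y)) (a : N) :
    mul' (e 1) a = a := by
  rw [e.mul_eq_of_map_mul he, Equiv.symm_apply_apply, one_mul, Equiv.apply_symm_apply]

end Transport

theorem add_self_eq_zero_of_two_eq_zero {R : Type*} [NonAssocSemiring R] (h2 : (2 : R) = 0)
    (a : R) : a + a = 0 := by
  rw [← two_mul, h2, zero_mul]

section LeibnizMaps

variable {A F : Type*} [Ring A] [FunLike F A A] {d d' : F}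

def twistMul (d d' : F) (x y : A) : A :=
  x * y + d x * d' y + d' x * d y + d (d' x) * d (d' y)

def twist (d d' : F) (x : A) : A :=
  x + d (d' x)

theorem map_one_eq_zero_of_leibniz (hd : ∀ x y, d (x * y) = d x * y + x * d y) : d 1 = 0 := by
  simpa using hd 1 1

variable [AddMonoidHomClass F A A]

theorem comp_apply_mul_of_leibniz (hd : ∀ x y, d (x * y) = d x * y + x * d y)
    (hd' : ∀ x y, d' (x * y) = d' x * y + x * d' y) (x y : A) :
    d (d' (x * y)) = d (d' x) * y + d' x * d y + d x * d' y + x * d (d' y) := by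
  rw [hd', map_add, hd, hd]
  abel

variable (hdd : ∀ x, d (d x) = 0) (hd'd' : ∀ x, d' (d' x) = 0)
  (hcomm : ∀ x, d (d' x) = d' (d x))
include hd'd' hcomm

theorem map_comp_apply_eq_zero (x : A) : d' (d (d' x)) = 0 := by
  rw [← hcomm, hd'd', map_zero]

theorem comp_comp_apply_eq_zero (x : A) : d (d' (d (d' x))) = 0 := by
  rw [map_comp_apply_eq_zero hd'd' hcomm, map_zero]

theorem twist_involutive (h2 : (2 : A) = 0) : Function.Involutive (twist d d') := by
  intro x
  rw [twist, twist, map_add, map_add, comp_comp_apply_eq_zero hd'd' hcomm, add_zero, add_assoc,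
    add_self_eq_zero_of_two_eq_zero h2, add_zero]

include hdd in
theorem twist_mul_of_leibniz (h2 : (2 : A) = 0) (hd : ∀ x y, d (x * y) = d x * y + x * d y)
    (hd' : ∀ x y, d' (x * y) = d' x * y + x * d' y) (x y : A) :
    twist d d' (x * y) = twistMul d d' (twist d d' x) (twist d d' y) := by
  simp only [twist, twistMul, comp_apply_mul_of_leibniz hd hd', map_add, hdd,
    map_comp_apply_eq_zero hd'd' hcomm, add_zero, mul_add, add_mul]
  rw [← sub_eq_zero]
  calc _ = -(d (d' x) * d (d' y) + d (d' x) * d (d' y)) := by abel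
    _ = 0 := by rw [add_self_eq_zero_of_two_eq_zero h2, neg_zero]

end LeibnizMaps

/-- Characteristic-2 algebraic model of Lemma 7.3: for square-zero commuting
derivations d, d' of an algebra A with 2 = 0, the operation
x∗y = x·y + d(x)·d'(y) + d'(x)·d(y) + (dd')(x)·(dd')(y) is an associative
unital product, and f = id + d∘d' is a self-inverse algebra isomorphism
from (A, ·) to (A, ∗). -/
theorem char_two_twist_multiplicative_equivalence
    {k A : Type*} [CommRing k] [Ring A] [Algebra k A]
    (h2 : (2 : A) = 0)
    (d d' : A →ₗ[k] A)
    (hd_leib : ∀ x y : A, d (x * y) = d x * y + x * d y)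
    (hd'_leib : ∀ x y : A, d' (x * y) = d' x * y + x * d' y)
    (hdd : ∀ x : A, d (d x) = 0)
    (hd'd' : ∀ x : A, d' (d' x) = 0)
    (hcomm : ∀ x : A, d (d' x) = d' (d x))
    (mul' : A → A → A)
    (hmul' : ∀ x y : A,
      mul' x y = x * y + d x * d' y + d' x * d y + d (d' x) * d (d' y))
    (f : A → A) (hf : ∀ x : A, f x = x + d (d' x)) :
    (∀ x y z : A, mul' (mul' x y) z = mul' x (mul' y z)) ∧
    (∀ x : A, mul' x 1 = x) ∧ (∀ x : A, mul' 1 x = x) ∧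
    (∀ x : A, f (f x) = x) ∧
    (∀ x y : A, f (x * y) = mul' (f x) (f y)) := by
  obtain rfl : mul' = twistMul d d' := funext₂ hmul'
  obtain rfl : f = twist d d' := funext hf
  have hinv : Function.Involutive (twist d d') := twist_involutive hd'd' hcomm h2
  have hmul := twist_mul_of_leibniz hdd hd'd' hcomm h2 hd_leib hd'_leib
  have hone : twist d d' 1 = 1 := by
    simp [twist, map_one_eq_zero_of_leibniz hd'_leib]
  let e := hinv.toPerm
  refine ⟨e.mul_assoc_of_map_mul hmul, fun x => ?_, fun x => ?_, hinv, hmul⟩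
  · simpa [e, hone] using e.mul_map_one_of_map_mul hmul x
  · simpa [e, hone] using e.map_one_mul_of_map_mul hmul x
end
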